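/- arXiv:1805.10337 — 2 statements merged into one kernel-verified Lean document; each statement's English description precedes it below -/
import Mathlib

section
/- Let d = 2, μ ∈ ℝ, α,β ∈ ℝ² orthonormal, S = (−μ α⊗β, Id). If f : ℝ²×ℝ² → ℝ is continuously differentiable and S-objective (f(z + xα + yβ, w + μyα) = f(z,w) for all x,y ∈ ℝ), then ∇_z f(z,w) = −μ (∇_w f(z,w) · α) β for all (z,w). -/
open scoped RealInnerProductSpace

/-! Writing `v = ⟪α, v⟫ α + ⟪β, v⟫ β`, objectivity makes `f` constant along the line through
`(z, w)` in direction `(v, μ ⟪β, v⟫ α)`, so the derivative kills that direction; linearity of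
the derivative then separates `(v, 0)` from `μ ⟪β, v⟫ (0, α)`. -/

theorem fderiv_apply_eq_zero_of_forall_add_smul_eq {𝕜 E F : Type*} [NontriviallyNormedField 𝕜]
    [NormedAddCommGroup E] [NormedSpace 𝕜 E] [NormedAddCommGroup F] [NormedSpace 𝕜 F]
    {f : E → F} {x v : E} (hf : DifferentiableAt 𝕜 f x) (h : ∀ t : 𝕜, f (x + t • v) = f x) :
    fderiv 𝕜 f x v = 0 := by
  rw [← hf.lineDeriv_eq_fderiv, lineDeriv, funext h, deriv_const]

theorem inner_smul_add_inner_smul_eq_of_finrank_eq_two {E : Type*} [NormedAddCommGroup E]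
    [InnerProductSpace ℝ E] (hE : Module.finrank ℝ E = 2) {α β : E}
    (hαα : ⟪α, α⟫ = 1) (hββ : ⟪β, β⟫ = 1) (hαβ : ⟪α, β⟫ = 0) (v : E) :
    ⟪α, v⟫ • α + ⟪β, v⟫ • β = v := by
  have hon : Orthonormal ℝ ![α, β] := by
    have hunit {u : E} (hu : ⟪u, u⟫ = 1) : ‖u‖ = 1 := by
      rw [norm_eq_sqrt_real_inner, hu, Real.sqrt_one]
    simp [hunit hαα, hunit hββ, hαβ]
  let b := OrthonormalBasis.mk hon
    (hon.linearIndependent.span_eq_top_of_card_eq_finrank (by simp [hE])).ge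
  simpa [b, Fin.sum_univ_two] using b.sum_repr' v

theorem stmt_3 (μ : ℝ) (α β : EuclideanSpace ℝ (Fin 2))
    (hαα : ⟪α, α⟫ = 1) (hββ : ⟪β, β⟫ = 1) (hαβ : ⟪α, β⟫ = 0)
    (f : EuclideanSpace ℝ (Fin 2) × EuclideanSpace ℝ (Fin 2) → ℝ)
    (hf : ContDiff ℝ 1 f)
    (hobj : ∀ z w : EuclideanSpace ℝ (Fin 2), ∀ x y : ℝ,
      f (z + x • α + y • β, w + (μ * y) • α) = f (z, w)) :
    ∀ z w v : EuclideanSpace ℝ (Fin 2),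
      fderiv ℝ f (z, w) (v, 0) = -μ * (fderiv ℝ f (z, w) (0, α)) * ⟪β, v⟫ := by
  intro z w v
  have hv := inner_smul_add_inner_smul_eq_of_finrank_eq_two (by simp) hαα hββ hαβ v
  have hzero : fderiv ℝ f (z, w) (v, (μ * ⟪β, v⟫) • α) = 0 := by
    refine fderiv_apply_eq_zero_of_forall_add_smul_eq (hf.differentiable one_ne_zero _) fun t ↦ ?_
    convert hobj z w (t * ⟪α, v⟫) (t * ⟪β, v⟫) using 2
    simp only [Prod.mk_add_mk, Prod.smul_mk, Prod.mk.injEq]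
    constructor
    · conv_lhs => rw [← hv]
      module
    · module
  have hsplit : ((v, 0) : EuclideanSpace ℝ (Fin 2) × EuclideanSpace ℝ (Fin 2)) =
      (v, (μ * ⟪β, v⟫) • α) - (μ * ⟪β, v⟫) • (0, α) := by
    simp
  rw [hsplit, map_sub, map_smul, hzero, smul_eq_mul]
  ring
end

section
/- The 5×5 matrix N with rows (0, 2√3, 0, 0, 0), (−√3/2, −2, 3√3/2, 0, 0), (0, −√3, −4, √3, 0), (0, 0, −3√3/2, −6, √3/2), (0, 0, 0, −2√3, −8) has all eigenvalues with strictly negative real part. -/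
/-!
Cofactor expansion shows that the characteristic polynomial of `N` is
`(X + 2) (X + 3) (X + 4) (X + 5) (X + 6)`: the matrix is tridiagonal and `√3` enters only through
the products of opposite off-diagonal entries, all of which are rational. Hence the spectrum of `N`
is `{-2, -3, -4, -5, -6}`, and no Routh–Hurwitz argument is needed.
-/

open Matrix Polynomial

noncomputable def fourthMomentOperator : Matrix (Fin 5) (Fin 5) ℝ :=
  !![0, 2*√3, 0, 0, 0;
     -√3/2, -2, 3*√3/2, 0, 0;
     0, -√3, -4, √3, 0;
     0, 0, -3*√3/2, -6, √3/2;
     0, 0, 0, -2*√3, -8]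

theorem det_scalar_sub_fourthMomentOperator (x : ℝ) :
    (scalar (Fin 5) x - fourthMomentOperator).det =
      (x + 2) * (x + 3) * (x + 4) * (x + 5) * (x + 6) := by
  have hs : √3 ^ 2 = 3 := Real.sq_sqrt (by norm_num)
  simp [fourthMomentOperator, det_succ_row_zero, Fin.sum_univ_succ, Fin.succAbove]
  linear_combination ((4 * x + 16) * √3 ^ 2 + 5 * x ^ 3 + 60 * x ^ 2 + 220 * x + 240) * hs

theorem charpoly_fourthMomentOperator :
    fourthMomentOperator.charpoly = (X + 2) * (X + 3) * (X + 4) * (X + 5) * (X + 6) := by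
  refine Polynomial.funext fun x => ?_
  rw [eval_charpoly, det_scalar_sub_fourthMomentOperator]
  simp

theorem spectrum_fourthMomentOperator :
    spectrum ℂ (fourthMomentOperator.map Complex.ofRealHom) = {-2, -3, -4, -5, -6} := by
  ext z
  rw [mem_spectrum_iff_isRoot_charpoly, charpoly_map, charpoly_fourthMomentOperator]
  simp [add_eq_zero_iff_eq_neg, or_assoc]

theorem stmt_6 :
    let s3 : ℝ := Real.sqrt 3
    let N : Matrix (Fin 5) (Fin 5) ℝ :=
      !![0, 2*s3, 0, 0, 0;
         -s3/2, -2, 3*s3/2, 0, 0;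
         0, -s3, -4, s3, 0;
         0, 0, -3*s3/2, -6, s3/2;
         0, 0, 0, -2*s3, -8]
    ∀ z : ℂ, z ∈ spectrum ℂ (N.map (Complex.ofReal ·)) → z.re < 0 := by
  intro s3 N
  change ∀ z ∈ spectrum ℂ (fourthMomentOperator.map Complex.ofRealHom), z.re < 0
  rw [spectrum_fourthMomentOperator]
  rintro z (rfl | rfl | rfl | rfl | rfl) <;> norm_num
end
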